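/- Let H be a finite-dimensional semisimple Hopf algebra over a field of characteristic zero with Haar integral ℓ. Then e = ℓ₍₁₎ ⊗ S(ℓ₍₂₎) is a separability idempotent for H, i.e. m(e) = 1 and (h·ℓ₍₁₎) ⊗ S(ℓ₍₂₎) = ℓ₍₁₎ ⊗ (S(ℓ₍₂₎)·h) for all h ∈ H. -/

import Mathlib

/-!
Write `e = ℓ₍₁₎ ⊗ S(ℓ₍₂₎)`. Since `S` is antimultiplicative,
`(id ⊗ S)(Δx · y) = (x₁ ⊗ 1) · (id ⊗ S)(y) · (1 ⊗ S x₂)`, so left invariance of `ℓ`, through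
`Δh · Δℓ = Δ(hℓ) = ε(h) Δℓ`, gives `(h₁ ⊗ 1) e (1 ⊗ S h₂) = ε(h) e`. With coassociativity,
`(h ⊗ 1) e = (h₁ ⊗ 1) e (1 ⊗ S(h₂) h₃) = ε(h₁) e (1 ⊗ h₂) = e (1 ⊗ h)`,
while `m(e) = ε(ℓ) 1 = 1` is the antipode axiom.
-/

open TensorProduct Coalgebra HopfAlgebra

namespace HopfAlgebra

variable {R H : Type*} [CommSemiring R] [Semiring H]

section Sandwich

variable [Algebra R H]

noncomputable def sandwich (e : H ⊗[R] H) : H ⊗[R] H →ₗ[R] H ⊗[R] H :=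
  lift <| LinearMap.mk₂ R (fun x y ↦ (x ⊗ₜ 1) * e * (1 ⊗ₜ y))
    (fun _ _ _ ↦ by simp only [add_tmul, add_mul])
    (fun _ _ _ ↦ by simp only [← smul_tmul', smul_mul_assoc])
    (fun _ _ _ ↦ by simp only [tmul_add, mul_add])
    (fun _ _ _ ↦ by simp only [tmul_smul, mul_smul_comm])

@[simp] lemma sandwich_tmul (e : H ⊗[R] H) (x y : H) :
    sandwich e (x ⊗ₜ y) = (x ⊗ₜ 1) * e * (1 ⊗ₜ y) := rfl

lemma sandwich_mul_one_tmul (e u : H ⊗[R] H) (z : H) :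
    sandwich e (u * (1 ⊗ₜ z)) = sandwich e u * (1 ⊗ₜ z) := by
  induction u using TensorProduct.induction_on with
  | zero => simp
  | tmul x y => simp [Algebra.TensorProduct.tmul_mul_tmul, mul_assoc]
  | add u v hu hv => simp only [add_mul, map_add, hu, hv]

end Sandwich

variable [HopfAlgebra R H]

lemma map_id_antipode_mul (u w : H ⊗[R] H) :
    map .id (antipode R) (u * w) =
      sandwich (map .id (antipode R) w) (map .id (antipode R) u) := by
  induction u using TensorProduct.induction_on with
  | zero => simp
  | add u v hu hv => simp only [add_mul, map_add, hu, hv]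
  | tmul a b =>
    rw [map_tmul, sandwich_tmul]
    induction w using TensorProduct.induction_on with
    | zero => simp
    | add w w' hw hw' => simp only [mul_add, add_mul, map_add, hw, hw']
    | tmul c d => simp [Algebra.TensorProduct.tmul_mul_tmul, antipode_mul_antidistrib]

lemma sandwich_map_id_antipode_comul {ℓ : H} (hℓ : ∀ h : H, h * ℓ = counit (R := R) h • ℓ)
    (x : H) :
    sandwich (map .id (antipode R) (comul ℓ)) (map .id (antipode R) (comul x)) =
      counit (R := R) x • map .id (antipode R) (comul ℓ) := by
  rw [← map_id_antipode_mul, ← Bialgebra.comul_mul, hℓ, map_smul, map_smul]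

lemma tmul_one_eq_sum_tmul_antipode_mul (h : H) :
    h ⊗ₜ[R] (1 : H) = ∑ i ∈ (ℛ R h).index, ∑ j ∈ (ℛ R ((ℛ R h).right i)).index,
      (ℛ R h).left i ⊗ₜ
        (antipode R ((ℛ R ((ℛ R h).right i)).left j) * (ℛ R ((ℛ R h).right i)).right j) := by
  have := congr(LinearMap.lTensor H (Algebra.linearMap R H) $(sum_tmul_counit_eq (ℛ R h)))
  simp only [map_sum, LinearMap.lTensor_tmul, Algebra.linearMap_apply, map_one] at this
  simp_rw [← tmul_sum, sum_antipode_mul_eq_algebraMap_counit, ← this]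

lemma tmul_one_mul_eq_mul_one_tmul {e : H ⊗[R] H}
    (he : ∀ x : H, sandwich e (map .id (antipode R) (comul x)) = counit (R := R) x • e) (h : H) :
    (h ⊗ₜ 1) * e = e * (1 ⊗ₜ h) := by
  let r := ℛ R h
  let G : H ⊗[R] (H ⊗[R] H) →ₗ[R] H ⊗[R] H :=
    sandwich e ∘ₗ LinearMap.lTensor H (LinearMap.mul' R H ∘ₗ map (antipode R) .id)
  have coassoc_sum := congr(G $(sum_tmul_tmul_eq r (fun i ↦ ℛ R (r.left i)) (fun i ↦ ℛ R (r.right i))))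
  simp only [map_sum, G, LinearMap.comp_apply, LinearMap.lTensor_tmul, map_tmul,
    LinearMap.mul'_apply, LinearMap.id_apply] at coassoc_sum
  calc (h ⊗ₜ 1) * e = sandwich e (h ⊗ₜ 1) := by
        rw [sandwich_tmul, ← Algebra.TensorProduct.one_def, mul_one]
    _ = ∑ i ∈ r.index, ∑ j ∈ (ℛ R (r.right i)).index, sandwich e
          (r.left i ⊗ₜ (antipode R ((ℛ R (r.right i)).left j) * (ℛ R (r.right i)).right j)) := by
        rw [tmul_one_eq_sum_tmul_antipode_mul]; simp only [map_sum]; rfl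
    _ = ∑ i ∈ r.index, ∑ j ∈ (ℛ R (r.left i)).index, sandwich e
          ((ℛ R (r.left i)).left j ⊗ₜ (antipode R ((ℛ R (r.left i)).right j) * r.right i)) :=
        coassoc_sum.symm
    _ = ∑ i ∈ r.index, sandwich e (map .id (antipode R) (comul (r.left i))) * (1 ⊗ₜ r.right i) := by
        refine Finset.sum_congr rfl fun i _ ↦ ?_
        rw [← (ℛ R (r.left i)).eq, map_sum, map_sum, Finset.sum_mul]
        refine Finset.sum_congr rfl fun j _ ↦ ?_
        rw [map_tmul, ← sandwich_mul_one_tmul, Algebra.TensorProduct.tmul_mul_tmul, mul_one]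
        rfl
    _ = e * (1 ⊗ₜ h) := by
        simp_rw [he, smul_mul_assoc, ← mul_smul_comm, ← tmul_smul, ← Finset.mul_sum, ← tmul_sum]
        rw [sum_counit_smul]

end HopfAlgebra

theorem haar_separability_idempotent_general
    (F H : Type*) [Field F]
    [Ring H] [HopfAlgebra F H]
    (ℓ : H)
    (hL : ∀ h : H, h * ℓ = Coalgebra.counit (R := F) h • ℓ)
    (hc : Coalgebra.counit (R := F) ℓ = 1) :
    LinearMap.mul' F H
        (TensorProduct.map LinearMap.id (HopfAlgebra.antipode (R := F))
          (Coalgebra.comul (R := F) ℓ)) = 1 ∧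
    ∀ h : H,
      TensorProduct.map (LinearMap.mulLeft F h) LinearMap.id
          (TensorProduct.map LinearMap.id (HopfAlgebra.antipode (R := F))
            (Coalgebra.comul (R := F) ℓ))
        = TensorProduct.map LinearMap.id (LinearMap.mulRight F h)
            (TensorProduct.map LinearMap.id (HopfAlgebra.antipode (R := F))
              (Coalgebra.comul (R := F) ℓ)) := by
  refine ⟨?_, fun h ↦ ?_⟩
  · rw [← LinearMap.lTensor_def, mul_antipode_lTensor_comul_apply, hc, map_one]
  · have left : map (LinearMap.mulLeft F h) .id = LinearMap.mulLeft F (h ⊗ₜ[F] (1 : H)) := by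
      rw [LinearMap.mulLeft_tmul, LinearMap.mulLeft_one]
    have right : map .id (LinearMap.mulRight F h) = LinearMap.mulRight F ((1 : H) ⊗ₜ[F] h) := by
      rw [LinearMap.mulRight_tmul, LinearMap.mulRight_one]
    rw [left, right, LinearMap.mulLeft_apply, LinearMap.mulRight_apply]
    exact tmul_one_mul_eq_mul_one_tmul (sandwich_map_id_antipode_comul hL) h

/-- Let `H` be a finite-dimensional semisimple Hopf algebra over a field of
characteristic zero with Haar integral `ℓ`.  Then `e = ℓ₍₁₎ ⊗ S(ℓ₍₂₎)` is a separability
idempotent for `H`: `m(e) = 1` and `(h * ℓ₍₁₎) ⊗ S(ℓ₍₂₎) = ℓ₍₁₎ ⊗ (S(ℓ₍₂₎) * h)` for all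
`h ∈ H`.  Here `e = (id ⊗ S)(Δ ℓ)`. -/
theorem haar_separability_idempotent
    (F H : Type*) [Field F] [CharZero F]
    [Ring H] [HopfAlgebra F H]
    [FiniteDimensional F H] [IsSemisimpleRing H]
    (ℓ : H)
    (hL : ∀ h : H, h * ℓ = Coalgebra.counit (R := F) h • ℓ)
    (hR : ∀ h : H, ℓ * h = Coalgebra.counit (R := F) h • ℓ)
    (hc : Coalgebra.counit (R := F) ℓ = 1) :
    LinearMap.mul' F H
        (TensorProduct.map LinearMap.id (HopfAlgebra.antipode (R := F))
          (Coalgebra.comul (R := F) ℓ)) = 1 ∧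
    ∀ h : H,
      TensorProduct.map (LinearMap.mulLeft F h) LinearMap.id
          (TensorProduct.map LinearMap.id (HopfAlgebra.antipode (R := F))
            (Coalgebra.comul (R := F) ℓ))
        = TensorProduct.map LinearMap.id (LinearMap.mulRight F h)
            (TensorProduct.map LinearMap.id (HopfAlgebra.antipode (R := F))
              (Coalgebra.comul (R := F) ℓ)) :=
  haar_separability_idempotent_general F H ℓ hL hc
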